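/- arXiv:cs/0610108 — 2 statements merged into one kernel-verified Lean document; each statement's English description precedes it below -/
import Mathlib

section
/- Hölder's formula: for positive integers q and n, c_q(n) = μ(q/gcd(q,n)) · φ(q) / φ(q/gcd(q,n)), where μ is the Möbius function and φ is Euler's totient function. -/
open Finset Complex

noncomputable def ramanujanSum (q n : ℕ) : ℂ :=
  ∑ p ∈ (Finset.Icc 1 q).filter (fun p => Nat.Coprime p q),
    Complex.exp (2 * Real.pi * Complex.I * p * n / q)

-- ψ applied to a natural cast
lemma psi_natCast (q : ℕ) [NeZero q] (a : ℕ) :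
    ZMod.stdAddChar ((a : ZMod q)) = Complex.exp (2 * Real.pi * Complex.I * a / q) := by
  have := ZMod.stdAddChar_coe (N := q) (a : ℤ)
  push_cast at this
  exact this

lemma psi_mul (q : ℕ) [NeZero q] (a b : ℕ) :
    ZMod.stdAddChar ((a : ZMod q) * (b : ZMod q)) =
      Complex.exp (2 * Real.pi * Complex.I * a * b / q) := by
  have h : ((a : ZMod q) * (b : ZMod q)) = (((a * b : ℕ)) : ZMod q) := by push_cast; ring
  rw [h, psi_natCast]
  congr 1
  push_cast
  ring

-- bridge between unit sums and nat sums
lemma sum_units_eq (m : ℕ) [NeZero m] (F : ZMod m → ℂ) :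
    ∑ u : (ZMod m)ˣ, F u =
      ∑ k ∈ (Finset.range m).filter (fun k => Nat.Coprime k m), F (k : ZMod m) := by
  refine Finset.sum_bij' (fun u _ => (u : ZMod m).val)
    (fun k hk => ZMod.unitOfCoprime k (Finset.mem_filter.mp hk).2) ?_ ?_ ?_ ?_ ?_
  · intro u _
    exact Finset.mem_filter.mpr ⟨Finset.mem_range.mpr (ZMod.val_lt _), ZMod.val_coe_unit_coprime u⟩
  · intro k hk
    exact Finset.mem_univ _
  · intro u _
    ext
    simp [ZMod.coe_unitOfCoprime, ZMod.natCast_zmod_val]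
  · intro k hk
    simp [ZMod.coe_unitOfCoprime, ZMod.val_natCast_of_lt (Finset.mem_range.mp (Finset.mem_filter.mp hk).1)]
  · intro u _
    rw [ZMod.natCast_zmod_val]

lemma moebius_sum_divisors (k : ℕ) :
    ∑ d ∈ k.divisors, (ArithmeticFunction.moebius d : ℂ) = if k = 1 then 1 else 0 := by
  have h := ArithmeticFunction.moebius_mul_coe_zeta
  have h2 : ((ArithmeticFunction.moebius * ↑ArithmeticFunction.zeta : ArithmeticFunction ℤ)) k
      = (1 : ArithmeticFunction ℤ) k := by rw [h]
  rw [ArithmeticFunction.coe_mul_zeta_apply, ArithmeticFunction.one_apply] at h2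
  have := congrArg (fun z : ℤ => (z : ℂ)) h2
  push_cast at this
  simpa using this

lemma geom_exp_sum (m : ℕ) (hm : 0 < m) :
    ∑ j ∈ Finset.range m, Complex.exp (2 * Real.pi * Complex.I * j / m)
      = if m = 1 then 1 else 0 := by
  rcases eq_or_ne m 1 with rfl | hm1
  · simp
  · have hmC : (m : ℂ) ≠ 0 := Nat.cast_ne_zero.mpr hm.ne'
    set z : ℂ := Complex.exp (2 * Real.pi * Complex.I / m) with hz
    have hpow : ∀ j : ℕ, Complex.exp (2 * Real.pi * Complex.I * j / m) = z ^ j := by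
      intro j
      rw [hz, ← Complex.exp_nat_mul]
      congr 1
      ring
    have hzm : z ^ m = 1 := by
      rw [hz, ← Complex.exp_nat_mul]
      have : (m : ℂ) * (2 * Real.pi * Complex.I / m) = 2 * Real.pi * Complex.I := by
        field_simp
      rw [this, Complex.exp_two_pi_mul_I]
    have hz1 : z ≠ 1 := by
      intro hcon
      rw [hz, Complex.exp_eq_one_iff] at hcon
      obtain ⟨N, hN⟩ := hcon
      have h2pi : (2 * Real.pi * Complex.I) ≠ 0 := by
        simp [Real.pi_ne_zero, Complex.I_ne_zero]
      rw [div_eq_iff hmC] at hN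
      have h1 : ((1 : ℤ) : ℂ) * (2 * Real.pi * Complex.I)
          = ((N * m : ℤ) : ℂ) * (2 * Real.pi * Complex.I) := by
        push_cast
        linear_combination hN
      have h2 : ((1 : ℤ) : ℂ) = ((N * m : ℤ) : ℂ) := mul_right_cancel₀ h2pi h1
      have h3 : (1 : ℤ) = N * m := Int.cast_injective h2
      have hdvd : (m : ℤ) ∣ 1 := ⟨N, by rw [h3]; ring⟩
      have := Int.le_of_dvd one_pos hdvd
      omega
    simp only [hpow, hm1, if_false]
    rw [geom_sum_eq hz1, hzm, sub_self, zero_div]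

lemma inner_divisor_sum (m d : ℕ) (hm : 0 < m) (hd : d ∣ m) :
    ∑ k ∈ (Finset.range m).filter (fun k => d ∣ k),
      Complex.exp (2 * Real.pi * Complex.I * k / m) = if d = m then 1 else 0 := by
  have hd0 : 0 < d := Nat.pos_of_dvd_of_pos hd hm
  obtain ⟨m', rfl⟩ := hd
  have hm' : 0 < m' := Nat.pos_of_ne_zero (by rintro rfl; simp at hm)
  have key : ∀ j : ℕ, Complex.exp (2 * Real.pi * Complex.I * (d * j : ℕ) / (d * m' : ℕ))
      = Complex.exp (2 * Real.pi * Complex.I * j / m') := by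
    intro j
    congr 1
    have hdC : (d : ℂ) ≠ 0 := Nat.cast_ne_zero.mpr hd0.ne'
    have hmC : (m' : ℂ) ≠ 0 := Nat.cast_ne_zero.mpr hm'.ne'
    push_cast
    field_simp
  have hre : ∑ k ∈ (Finset.range (d * m')).filter (fun k => d ∣ k),
      Complex.exp (2 * Real.pi * Complex.I * k / (d * m' : ℕ))
      = ∑ j ∈ Finset.range m', Complex.exp (2 * Real.pi * Complex.I * j / m') := by
    refine Finset.sum_bij' (fun k _ => k / d) (fun j _ => d * j) ?_ ?_ ?_ ?_ ?_
    · intro k hk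
      obtain ⟨hk1, hk2⟩ := Finset.mem_filter.mp hk
      refine Finset.mem_range.mpr ?_
      have := Finset.mem_range.mp hk1
      exact Nat.div_lt_of_lt_mul (by omega)
    · intro j hj
      refine Finset.mem_filter.mpr ⟨Finset.mem_range.mpr ?_, dvd_mul_right d j⟩
      exact (Nat.mul_lt_mul_left hd0).mpr (Finset.mem_range.mp hj)
    · intro k hk
      exact Nat.mul_div_cancel' (Finset.mem_filter.mp hk).2
    · intro j _
      exact Nat.mul_div_cancel_left j hd0
    · intro k hk
      rw [← key (k / d), Nat.mul_div_cancel' (Finset.mem_filter.mp hk).2]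
  rw [hre, geom_exp_sum m' hm']
  congr 1
  simp only [eq_iff_iff]
  constructor
  · rintro rfl
    simp
  · intro h
    exact Nat.eq_of_mul_eq_mul_left hd0 (by rw [mul_one, ← h])

lemma units_psi_sum (m : ℕ) [NeZero m] :
    ∑ u : (ZMod m)ˣ, ZMod.stdAddChar ((u : ZMod m))
      = (ArithmeticFunction.moebius m : ℂ) := by
  have hm : 0 < m := Nat.pos_of_ne_zero (NeZero.ne m)
  rw [sum_units_eq m (fun x => ZMod.stdAddChar x)]
  have step1 : ∑ k ∈ (Finset.range m).filter (fun k => Nat.Coprime k m),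
      ZMod.stdAddChar ((k : ZMod m))
      = ∑ k ∈ Finset.range m, (if Nat.gcd k m = 1 then (1:ℂ) else 0)
          * Complex.exp (2 * Real.pi * Complex.I * k / m) := by
    rw [Finset.sum_filter]
    refine Finset.sum_congr rfl fun k _ => ?_
    by_cases h : Nat.Coprime k m
    · rw [if_pos h, if_pos h, one_mul, psi_natCast]
    · rw [if_neg h, if_neg h, zero_mul]
  rw [step1]
  have step2 : ∀ k, (if Nat.gcd k m = 1 then (1:ℂ) else 0)
      = ∑ d ∈ m.divisors, if d ∣ k then (ArithmeticFunction.moebius d : ℂ) else 0 := by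
    intro k
    rw [← moebius_sum_divisors (Nat.gcd k m), ← Finset.sum_filter]
    congr 1
    ext d
    simp only [Nat.mem_divisors, Finset.mem_filter, Nat.dvd_gcd_iff]
    constructor
    · rintro ⟨h1, _⟩
      exact ⟨⟨h1.2, hm.ne'⟩, h1.1⟩
    · rintro ⟨⟨h1, _⟩, h3⟩
      exact ⟨⟨h3, h1⟩, Nat.gcd_ne_zero_right hm.ne'⟩
  simp_rw [step2, Finset.sum_mul, ite_mul, zero_mul]
  rw [Finset.sum_comm]
  have step3 : ∀ d ∈ m.divisors,
      (∑ k ∈ Finset.range m, if d ∣ k then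
        (ArithmeticFunction.moebius d : ℂ) * Complex.exp (2 * Real.pi * Complex.I * k / m) else 0)
      = (ArithmeticFunction.moebius d : ℂ) * (if d = m then 1 else 0) := by
    intro d hd
    rw [← Finset.sum_filter, ← Finset.mul_sum,
      inner_divisor_sum m d hm (Nat.mem_divisors.mp hd).1]
  rw [Finset.sum_congr rfl step3]
  rw [Finset.sum_eq_single_of_mem m (Nat.mem_divisors_self m hm.ne')
    (fun b _ hb => by rw [if_neg hb, mul_zero])]
  rw [if_pos rfl, mul_one]

lemma fiber_card_monoidHom {G H : Type*} [Group G] [Group H] [Fintype G] [Fintype H]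
    [DecidableEq H] (f : G →* H) (hf : Function.Surjective f) (h : H) :
    (Finset.univ.filter (fun g => f g = h)).card = Fintype.card G / Fintype.card H := by
  obtain ⟨g0, hg0⟩ := hf h
  have e : {g : G // f g = h} ≃ f.ker :=
    { toFun := fun x => ⟨g0⁻¹ * x.1, by
        simp [MonoidHom.mem_ker, map_mul, x.2, hg0]⟩
      invFun := fun k => ⟨g0 * k.1, by
        have hk := k.2
        rw [MonoidHom.mem_ker] at hk
        simp [map_mul, hg0, hk]⟩
      left_inv := fun x => by simp
      right_inv := fun k => by simp }
  have hcard1 : (Finset.univ.filter (fun g => f g = h)).card = Nat.card f.ker := by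
    rw [← Fintype.card_subtype, Nat.card_eq_fintype_card]
    exact Fintype.card_congr e
  have hcard2 : Nat.card G = Fintype.card H * Nat.card f.ker := by
    rw [Subgroup.card_eq_card_quotient_mul_card_subgroup f.ker]
    congr 1
    rw [Nat.card_congr (QuotientGroup.quotientKerEquivOfSurjective f hf).toEquiv,
      Nat.card_eq_fintype_card]
  rw [hcard1]
  rw [Nat.card_eq_fintype_card] at hcard2
  rw [hcard2, Nat.mul_div_cancel_left _ Fintype.card_pos]

lemma sum_comp_monoidHom {G H : Type*} [Group G] [Group H] [Fintype G] [Fintype H]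
    [DecidableEq H] (f : G →* H) (hf : Function.Surjective f) (F : H → ℂ) :
    ∑ g : G, F (f g) = ((Fintype.card G / Fintype.card H : ℕ) : ℂ) * ∑ h : H, F h := by
  rw [Finset.sum_comp F (fun g => f g), Finset.image_univ_of_surjective hf, Finset.mul_sum]
  refine Finset.sum_congr rfl fun h _ => ?_
  rw [fiber_card_monoidHom f hf h, nsmul_eq_mul]



lemma icc_to_range (q n : ℕ) (hq : 0 < q) :
    ramanujanSum q n = ∑ k ∈ (Finset.range q).filter (fun k => Nat.Coprime k q),
      Complex.exp (2 * Real.pi * Complex.I * k * n / q) := by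
  unfold ramanujanSum
  refine Finset.sum_bij' (fun p _ => p % q) (fun k _ => if k = 0 then q else k) ?_ ?_ ?_ ?_ ?_
  · intro p hp
    obtain ⟨hp1, hp2⟩ := Finset.mem_filter.mp hp
    refine Finset.mem_filter.mpr ⟨Finset.mem_range.mpr (Nat.mod_lt _ hq), ?_⟩
    rwa [Nat.Coprime, ← Nat.gcd_rec, Nat.gcd_comm]
  · intro k hk
    obtain ⟨hk1, hk2⟩ := Finset.mem_filter.mp hk
    by_cases h0 : k = 0
    · subst h0
      have hq1 : q = 1 := by simpa [Nat.Coprime] using hk2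
      simp [hq1]
    · rw [if_neg h0]
      exact Finset.mem_filter.mpr ⟨Finset.mem_Icc.mpr
        ⟨Nat.one_le_iff_ne_zero.mpr h0, (Finset.mem_range.mp hk1).le⟩, hk2⟩
  · intro p hp
    obtain ⟨hp1, _⟩ := Finset.mem_filter.mp hp
    obtain ⟨hpl, hpu⟩ := Finset.mem_Icc.mp hp1
    by_cases hpq : p = q
    · subst hpq
      simp
    · have hlt : p < q := lt_of_le_of_ne hpu hpq
      rw [Nat.mod_eq_of_lt hlt, if_neg (by omega)]
  · intro k hk
    by_cases h0 : k = 0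
    · subst h0
      simp
    · rw [if_neg h0, Nat.mod_eq_of_lt (Finset.mem_range.mp (Finset.mem_filter.mp hk).1)]
  · intro p hp
    obtain ⟨hp1, _⟩ := Finset.mem_filter.mp hp
    obtain ⟨hpl, hpu⟩ := Finset.mem_Icc.mp hp1
    by_cases hpq : p = q
    · rw [hpq, Nat.mod_self]
      have hqC : (q : ℂ) ≠ 0 := Nat.cast_ne_zero.mpr hq.ne'
      have h1 : 2 * Real.pi * Complex.I * (q : ℕ) * n / q = (n : ℂ) * (2 * Real.pi * Complex.I) := by
        field_simp
      rw [h1, Complex.exp_nat_mul_two_pi_mul_I]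
      norm_num
    · rw [Nat.mod_eq_of_lt (lt_of_le_of_ne hpu hpq)]

theorem ramanujanSum_holder (q n : ℕ) (hq : 0 < q) (hn : 0 < n) :
    ramanujanSum q n =
      (ArithmeticFunction.moebius (q / Nat.gcd q n) : ℂ) * (Nat.totient q : ℂ) /
        (Nat.totient (q / Nat.gcd q n) : ℂ) := by
  set g := Nat.gcd q n with hgdef
  have hg : 0 < g := Nat.gcd_pos_of_pos_left n hq
  set m := q / g with hmdef
  set n' := n / g with hndef
  have hmq : m ∣ q := Nat.div_dvd_of_dvd (Nat.gcd_dvd_left q n)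
  have hm : 0 < m := Nat.div_pos (Nat.le_of_dvd hq (Nat.gcd_dvd_left q n)) hg
  haveI : NeZero q := ⟨hq.ne'⟩
  haveI : NeZero m := ⟨hm.ne'⟩
  have hqe : g * m = q := Nat.mul_div_cancel' (Nat.gcd_dvd_left q n)
  have hne : g * n' = n := Nat.mul_div_cancel' (Nat.gcd_dvd_right q n)
  have hco : Nat.Coprime m n' := Nat.coprime_div_gcd_div_gcd hg
  -- step 1 : to units of ZMod q
  have h3 : ramanujanSum q n
      = ∑ u : (ZMod q)ˣ, ZMod.stdAddChar ((u : ZMod q) * ((n : ℕ) : ZMod q)) := by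
    rw [icc_to_range q n hq,
      sum_units_eq q (fun x => ZMod.stdAddChar (x * ((n : ℕ) : ZMod q)))]
    exact Finset.sum_congr rfl fun k _ => (psi_mul q k n).symm
  -- step 2 : transfer to ZMod m
  have h4 : ∀ u : (ZMod q)ˣ,
      ZMod.stdAddChar ((u : ZMod q) * ((n : ℕ) : ZMod q))
        = ZMod.stdAddChar (((ZMod.unitsMap hmq u : ZMod m)) * ((n' : ℕ) : ZMod m)) := by
    intro u
    have hu : (u : ZMod q) = (((u : ZMod q).val : ℕ) : ZMod q) := (ZMod.natCast_zmod_val _).symm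
    have hmap : ((ZMod.unitsMap hmq u : ZMod m)) = (((u : ZMod q).val : ℕ) : ZMod m) := by
      rw [ZMod.unitsMap_def, Units.coe_map]
      rw [show ((u : ZMod q)) = (((u : ZMod q).val : ℕ) : ZMod q) from hu]
      simp [map_natCast]
    rw [hu, hmap, psi_mul, psi_mul]
    congr 1
    have hgC : (g : ℂ) ≠ 0 := Nat.cast_ne_zero.mpr hg.ne'
    have hmC : (m : ℂ) ≠ 0 := Nat.cast_ne_zero.mpr hm.ne'
    have hqC : (q : ℂ) ≠ 0 := Nat.cast_ne_zero.mpr hq.ne'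
    have hnC : (n : ℂ) = (g : ℂ) * (n' : ℂ) := by exact_mod_cast (congrArg Nat.cast hne).symm
    have hqC2 : (q : ℂ) = (g : ℂ) * (m : ℂ) := by exact_mod_cast (congrArg Nat.cast hqe).symm
    rw [div_eq_div_iff hqC hmC, hnC, hqC2]
    ring
  rw [h3, Finset.sum_congr rfl fun u _ => h4 u]
  -- step 3 : fiber counting
  rw [sum_comp_monoidHom (ZMod.unitsMap hmq) (ZMod.unitsMap_surjective hmq)
    (fun v => ZMod.stdAddChar ((v : ZMod m) * ((n' : ℕ) : ZMod m)))]
  -- step 4 : twist by the unit n'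
  have h7 : ∑ v : (ZMod m)ˣ, ZMod.stdAddChar ((v : ZMod m) * ((n' : ℕ) : ZMod m))
      = ∑ w : (ZMod m)ˣ, ZMod.stdAddChar ((w : ZMod m)) := by
    have hco' : Nat.Coprime n' m := hco.symm
    have := Equiv.sum_comp (Equiv.mulRight (ZMod.unitOfCoprime n' hco'))
      (fun w : (ZMod m)ˣ => ZMod.stdAddChar ((w : ZMod m)))
    rw [← this]
    refine Finset.sum_congr rfl fun v _ => ?_
    simp only [Equiv.coe_mulRight, Units.val_mul, ZMod.coe_unitOfCoprime]
  rw [h7, units_psi_sum m]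
  -- step 5 : arithmetic
  rw [ZMod.card_units_eq_totient q, ZMod.card_units_eq_totient m]
  have hdvd : Nat.totient m ∣ Nat.totient q := Nat.totient_dvd_of_dvd hmq
  have htmC : ((Nat.totient m : ℕ) : ℂ) ≠ 0 :=
    Nat.cast_ne_zero.mpr (Nat.totient_pos.mpr hm).ne'
  rw [Nat.cast_div hdvd htmC]
  ring
end

section
/- Orthogonality of Ramanujan sums: for positive integers q and q', (1/[q,q']) Σ_{n=1}^{[q,q']} c_q(n) c_{q'}(n) = φ(q) if q = q', and 0 if q ≠ q', where [q,q'] denotes the least common multiple. -/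
open Finset Complex

-- Lemma B: character sum
lemma charSum (L m : ℕ) (hL : 0 < L) :
    ∑ n ∈ Finset.Icc 1 L, Complex.exp (2 * Real.pi * Complex.I * m * n / L) =
      if L ∣ m then (L : ℂ) else 0 := by
  have hL0 : (L : ℂ) ≠ 0 := Nat.cast_ne_zero.2 hL.ne'
  set ζ : ℂ := Complex.exp (2 * Real.pi * Complex.I * m / L) with hζ
  have hterm : ∀ n : ℕ, Complex.exp (2 * Real.pi * Complex.I * m * n / L) = ζ ^ n := by
    intro n
    rw [hζ, ← Complex.exp_nat_mul]
    congr 1; ring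
  have hzL : ζ ^ L = 1 := by
    rw [hζ, ← Complex.exp_nat_mul]
    have h1 : (L : ℂ) * (2 * Real.pi * Complex.I * m / L) = (m : ℤ) * (2 * Real.pi * Complex.I) := by
      push_cast; field_simp
    rw [h1, Complex.exp_int_mul_two_pi_mul_I]
  by_cases hd : L ∣ m
  · have hz1 : ζ = 1 := by
      obtain ⟨k, rfl⟩ := hd
      rw [hζ]
      have h2 : 2 * Real.pi * Complex.I * ((L * k : ℕ) : ℂ) / L = (k : ℤ) * (2 * Real.pi * Complex.I) := by
        push_cast; field_simp
      rw [h2, Complex.exp_int_mul_two_pi_mul_I]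
    simp only [hterm, hz1, one_pow, Finset.sum_const, Nat.card_Icc, if_pos hd]
    simp
  · have hz1 : ζ ≠ 1 := by
      intro h
      rw [hζ, Complex.exp_eq_one_iff] at h
      obtain ⟨k, hk⟩ := h
      apply hd
      have hm : (m : ℂ) = (k : ℂ) * L := by
        field_simp at hk
        have h2 : (2 * (Real.pi:ℂ) * Complex.I) * (m : ℂ) =
            (2 * (Real.pi:ℂ) * Complex.I) * ((k : ℂ) * L) := by linear_combination (2 * (Real.pi:ℂ) * Complex.I) * hk
        exact mul_left_cancel₀ Complex.two_pi_I_ne_zero h2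
      have hmz : (m : ℤ) = k * L := by exact_mod_cast hm
      have : (L : ℤ) ∣ (m : ℤ) := ⟨k, by linarith⟩
      exact_mod_cast this
    simp only [hterm, if_neg hd]
    have : ∑ n ∈ Finset.Icc 1 L, ζ ^ n = ∑ n ∈ Finset.range L, ζ ^ (1 + n) := by
      rw [← Finset.Ico_add_one_right_eq_Icc, Finset.sum_Ico_eq_sum_range]
      simp
    rw [this]
    simp only [pow_add, pow_one]
    rw [← Finset.mul_sum, geom_sum_eq hz1, hzL]
    simp

lemma dvd_lemma (q q' p p' : ℕ) (hq : 0 < q) (hq' : 0 < q')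
    (hp : Nat.Coprime p q) (hp' : Nat.Coprime p' q') :
    Nat.lcm q q' ∣ p * (Nat.lcm q q' / q) + p' * (Nat.lcm q q' / q') ↔
      (q = q' ∧ q ∣ p + p') := by
  set L := Nat.lcm q q' with hLdef
  have ha : q * (L / q) = L := Nat.mul_div_cancel' (Nat.dvd_lcm_left q q')
  have hb : q' * (L / q') = L := Nat.mul_div_cancel' (Nat.dvd_lcm_right q q')
  have hL : 0 < L := Nat.pos_of_ne_zero (Nat.lcm_ne_zero hq.ne' hq'.ne')
  have ha0 : 0 < L / q := Nat.div_pos (Nat.le_of_dvd hL (Nat.dvd_lcm_left q q')) hq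
  have hb0 : 0 < L / q' := Nat.div_pos (Nat.le_of_dvd hL (Nat.dvd_lcm_right q q')) hq'
  constructor
  · intro h
    -- first show q' ∣ q
    have key : ∀ (r r' s s' x x' : ℕ), 0 < r → 0 < r' → Nat.Coprime x' r' →
        r * s = L → r' * s' = L → L ∣ x * s + x' * s' → 0 < s' → r' ∣ r := by
      intro r r' s s' x x' hr hr' hx' hrs hrs' hdvd hs'
      have h1 : L ∣ (x * s + x' * s') * r := hdvd.mul_right r
      have h2 : (x * s + x' * s') * r = x * L + (x' * r) * s' := by
        rw [← hrs]; ring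
      rw [h2] at h1
      have h3 : L ∣ (x' * r) * s' := (Nat.dvd_add_right (dvd_mul_right L x)).mp (by rwa [mul_comm (x:ℕ) L] at h1)
      rw [← hrs'] at h3
      have h4 : r' ∣ x' * r := by
        have := (Nat.mul_dvd_mul_iff_right hs').mp h3
        exact this
      have h5 : r' ∣ r * x' := by rwa [mul_comm] at h4
      exact (Nat.Coprime.dvd_mul_right hx'.symm).mp h5
    have hq'q : q' ∣ q := key q q' (L/q) (L/q') p p' hq hq' hp' ha hb h hb0
    have hqq' : q ∣ q' := by
      have h' : L ∣ p' * (L / q') + p * (L / q) := by rwa [Nat.add_comm] at h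
      exact key q' q (L/q') (L/q) p' p hq' hq hp hb ha h' ha0
    have heq : q = q' := Nat.dvd_antisymm hqq' hq'q
    subst heq
    have hLq : L = q := Nat.lcm_self q
    rw [hLq, Nat.div_self hq] at h
    exact ⟨rfl, by simpa using h⟩
  · rintro ⟨rfl, hdvd⟩
    have hLq : L = q := Nat.lcm_self q
    rw [hLq, Nat.div_self hq]
    simpa using hdvd

lemma filter_eq_singleton (q p : ℕ) (hq : 0 < q) (hp1 : 1 ≤ p) (hpq : p ≤ q)
    (hp : Nat.Coprime p q) :
    ((Finset.Icc 1 q).filter (fun p' => Nat.Coprime p' q)).filter (fun p' => q ∣ p + p')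
      = {q - p % q} := by
  have hmod : p % q < q := Nat.mod_lt _ hq
  have hdm : q * (p / q) + p % q = p := Nat.div_add_mod p q
  set e := q - p % q with he
  have hdvd_e : q ∣ p + e := by
    set m := q * (p / q) with hm
    have h1 : p + e = m + q := by omega
    rw [h1]
    exact Nat.dvd_add (dvd_mul_right q (p / q)) dvd_rfl
  rw [Finset.eq_singleton_iff_unique_mem]
  constructor
  · simp only [Finset.mem_filter, Finset.mem_Icc]
    refine ⟨⟨⟨by omega, by omega⟩, ?_⟩, hdvd_e⟩
    rcases Nat.eq_zero_or_pos (p % q) with h0 | h0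
    · have hq1 : q = 1 := by
        have hqp : q ∣ p := Nat.dvd_of_mod_eq_zero h0
        have hg : q ∣ Nat.gcd p q := Nat.dvd_gcd hqp dvd_rfl
        rw [hp] at hg
        exact Nat.dvd_one.mp hg
      simp [hq1]
    · have hcop : Nat.Coprime (p % q) q := by
        have := Nat.gcd_rec q p
        unfold Nat.Coprime at *
        rw [← this]
        exact Nat.Coprime.symm hp
      exact (Nat.coprime_self_sub_left (le_of_lt hmod)).mpr hcop
  · intro p' hp'
    simp only [Finset.mem_filter, Finset.mem_Icc] at hp'
    obtain ⟨⟨⟨h1, h2⟩, _⟩, h4⟩ := hp'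
    rcases le_total p' e with hle | hle
    · have hd : q ∣ (p + e) - (p + p') := Nat.dvd_sub hdvd_e h4
      have h5 : (p + e) - (p + p') = e - p' := by omega
      rw [h5] at hd
      have := Nat.eq_zero_of_dvd_of_lt hd (by omega)
      omega
    · have hd : q ∣ (p + p') - (p + e) := Nat.dvd_sub h4 hdvd_e
      have h5 : (p + p') - (p + e) = p' - e := by omega
      rw [h5] at hd
      have h6 : p' - e < q := by omega
      have := Nat.eq_zero_of_dvd_of_lt hd h6
      omega

theorem ramanujanSum_orthogonality (q q' : ℕ) (hq : 0 < q) (hq' : 0 < q') :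
    (1 / (Nat.lcm q q' : ℂ)) *
        ∑ n ∈ Finset.Icc 1 (Nat.lcm q q'), ramanujanSum q n * ramanujanSum q' n =
      if q = q' then (Nat.totient q : ℂ) else 0 := by
  set L := Nat.lcm q q' with hLdef
  have hL : 0 < L := Nat.pos_of_ne_zero (Nat.lcm_ne_zero hq.ne' hq'.ne')
  have hLC : (L : ℂ) ≠ 0 := Nat.cast_ne_zero.2 hL.ne'
  have hqC : (q : ℂ) ≠ 0 := Nat.cast_ne_zero.2 hq.ne'
  have hq'C : (q' : ℂ) ≠ 0 := Nat.cast_ne_zero.2 hq'.ne'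
  have ha : q * (L / q) = L := Nat.mul_div_cancel' (Nat.dvd_lcm_left q q')
  have hb : q' * (L / q') = L := Nat.mul_div_cancel' (Nat.dvd_lcm_right q q')
  have haC : (q : ℂ) * ((L / q : ℕ) : ℂ) = (L : ℂ) := by exact_mod_cast congrArg (Nat.cast : ℕ → ℂ) ha
  have hbC : (q' : ℂ) * ((L / q' : ℕ) : ℂ) = (L : ℂ) := by exact_mod_cast congrArg (Nat.cast : ℕ → ℂ) hb
  have key : ∀ n : ℕ, ramanujanSum q n * ramanujanSum q' n =
      ∑ p ∈ (Finset.Icc 1 q).filter (fun p => Nat.Coprime p q),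
        ∑ p' ∈ (Finset.Icc 1 q').filter (fun p' => Nat.Coprime p' q'),
          Complex.exp (2 * Real.pi * Complex.I * ((p * (L / q) + p' * (L / q') : ℕ) : ℂ) * n / L) := by
    intro n
    rw [ramanujanSum, ramanujanSum, Finset.sum_mul_sum]
    refine Finset.sum_congr rfl fun p _ => Finset.sum_congr rfl fun p' _ => ?_
    rw [← Complex.exp_add]
    congr 1
    push_cast
    field_simp
    ring_nf
    linear_combination (-((p:ℂ) * n * (q':ℂ))) * haC +
      (-((n:ℂ) * (p':ℂ) * (q:ℂ))) * hbC
  have step1 : ∑ n ∈ Finset.Icc 1 L, ramanujanSum q n * ramanujanSum q' n =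
      ∑ p ∈ (Finset.Icc 1 q).filter (fun p => Nat.Coprime p q),
        ∑ p' ∈ (Finset.Icc 1 q').filter (fun p' => Nat.Coprime p' q'),
          (if L ∣ p * (L / q) + p' * (L / q') then (L : ℂ) else 0) := by
    simp only [key]
    rw [Finset.sum_comm]
    refine Finset.sum_congr rfl fun p _ => ?_
    rw [Finset.sum_comm]
    refine Finset.sum_congr rfl fun p' _ => ?_
    exact charSum L (p * (L / q) + p' * (L / q')) hL
  have step2 : ∑ n ∈ Finset.Icc 1 L, ramanujanSum q n * ramanujanSum q' n =
      ∑ p ∈ (Finset.Icc 1 q).filter (fun p => Nat.Coprime p q),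
        ∑ p' ∈ (Finset.Icc 1 q').filter (fun p' => Nat.Coprime p' q'),
          (if (q = q' ∧ q ∣ p + p') then (L : ℂ) else 0) := by
    rw [step1]
    refine Finset.sum_congr rfl fun p hp => Finset.sum_congr rfl fun p' hp' => ?_
    simp only [Finset.mem_filter, Finset.mem_Icc] at hp hp'
    exact if_congr (dvd_lemma q q' p p' hq hq' hp.2 hp'.2) rfl rfl
  rw [step2]
  by_cases hqq : q = q'
  · subst hqq
    have hLq : L = q := Nat.lcm_self q
    rw [if_pos rfl]
    have inner : ∀ p ∈ (Finset.Icc 1 q).filter (fun p => Nat.Coprime p q),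
        ∑ p' ∈ (Finset.Icc 1 q).filter (fun p' => Nat.Coprime p' q),
          (if (q = q ∧ q ∣ p + p') then (L : ℂ) else 0) = (L : ℂ) := by
      intro p hp
      simp only [Finset.mem_filter, Finset.mem_Icc] at hp
      simp only [true_and]
      rw [← Finset.sum_filter, filter_eq_singleton q p hq hp.1.1 hp.1.2 hp.2]
      simp
    rw [Finset.sum_congr rfl inner, Finset.sum_const]
    have hcardeq : ((Finset.Icc 1 q).filter (fun p => Nat.Coprime p q)).card = Nat.totient q := by
      rw [← Nat.filter_coprime_Ico_eq_totient q 1]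
      congr 1
      ext x
      simp [Nat.lt_succ_iff, Nat.coprime_comm, Nat.add_comm]
    rw [hcardeq, nsmul_eq_mul]
    rw [hLq]
    field_simp
  · rw [if_neg hqq]
    simp [hqq]
end
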